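/- arXiv:2407.05348 — 4 statements merged into one kernel-verified Lean document; each statement's English description precedes it below -/
import Mathlib

section
/- Let x ∈ ℂ and n ∈ ℤ, and define 𝚪(x,n) := Γ((n+ix)/2) / Γ(1+(n−ix)/2). If (±n+ix)/2 ∉ −ℕ and 1+(±n−ix)/2 ∉ −ℕ (so that none of the Gamma arguments is a nonpositive integer), then 𝚪(x,−n) = (−1)^n · 𝚪(x,n). -/
open Complex

/-- The complex gamma function `𝚪(x,n) = Γ((n+ix)/2) / Γ(1+(n-ix)/2)`. -/
noncomputable def cGamma (x : ℂ) (n : ℤ) : ℂ :=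
  Complex.Gamma ((n + Complex.I * x) / 2) / Complex.Gamma (1 + (n - Complex.I * x) / 2)

lemma aux (u p s : ℂ) (hu : u ≠ 0) : u * (p / (u * s)) = p / s := by
  rw [mul_div_assoc', mul_div_mul_left _ _ hu]

theorem cGamma_neg_index (x : ℂ) (n : ℤ)
    (h1 : ∀ m : ℕ, ((n : ℂ) + Complex.I * x) / 2 ≠ -(m : ℂ))
    (h2 : ∀ m : ℕ, ((-n : ℂ) + Complex.I * x) / 2 ≠ -(m : ℂ))
    (h3 : ∀ m : ℕ, 1 + ((n : ℂ) - Complex.I * x) / 2 ≠ -(m : ℂ))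
    (h4 : ∀ m : ℕ, 1 + ((-n : ℂ) - Complex.I * x) / 2 ≠ -(m : ℂ)) :
    cGamma x (-n) = (-1 : ℂ) ^ n * cGamma x n := by
  set a : ℂ := ((n : ℂ) + Complex.I * x) / 2 with ha_def
  set b : ℂ := ((-n : ℂ) + Complex.I * x) / 2 with hb_def
  have h1b : (1 : ℂ) + ((n : ℂ) - Complex.I * x) / 2 = 1 - b := by rw [hb_def]; ring
  have h1a : (1 : ℂ) + ((-n : ℂ) - Complex.I * x) / 2 = 1 - a := by rw [ha_def]; ring
  have hGa : Complex.Gamma a ≠ 0 := Complex.Gamma_ne_zero h1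
  have hGb : Complex.Gamma b ≠ 0 := Complex.Gamma_ne_zero h2
  have hG1b : Complex.Gamma (1 - b) ≠ 0 := by
    rw [← h1b]; exact Complex.Gamma_ne_zero h3
  have hG1a : Complex.Gamma (1 - a) ≠ 0 := by
    rw [← h1a]; exact Complex.Gamma_ne_zero h4
  have hra := Complex.Gamma_mul_Gamma_one_sub a
  have hrb := Complex.Gamma_mul_Gamma_one_sub b
  have hsa : Complex.sin (↑Real.pi * a) ≠ 0 := by
    intro h
    rw [h, div_zero] at hra
    exact mul_ne_zero hGa hG1a hra
  have hsb : Complex.sin (↑Real.pi * b) ≠ 0 := by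
    intro h
    rw [h, div_zero] at hrb
    exact mul_ne_zero hGb hG1b hrb
  have hab : (↑Real.pi : ℂ) * a = ↑Real.pi * b + (n : ℤ) * ↑Real.pi := by
    rw [ha_def, hb_def]; ring
  have hsin : Complex.sin (↑Real.pi * a) = (-1 : ℂ) ^ n * Complex.sin (↑Real.pi * b) := by
    rw [hab, Complex.sin_antiperiodic.add_int_mul_eq n]
    congr 1
    rcases Int.even_or_odd n with h | h
    · rw [Int.negOnePow_even _ h, h.neg_one_zpow]; simp
    · rw [Int.negOnePow_odd _ h, h.neg_one_zpow]; simp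
  have hpi : (↑Real.pi : ℂ) ≠ 0 := by
    exact_mod_cast Real.pi_ne_zero
  have hpow : ((-1 : ℂ) ^ n) ≠ 0 := by
    apply zpow_ne_zero; norm_num
  -- key: Γ(b) Γ(1-b) = (-1)^n Γ(a) Γ(1-a)
  have key : Complex.Gamma b * Complex.Gamma (1 - b)
      = (-1 : ℂ) ^ n * (Complex.Gamma a * Complex.Gamma (1 - a)) := by
    rw [hrb, hra, hsin, aux _ _ _ hpow]
  unfold cGamma
  push_cast
  rw [h1b, h1a, ← ha_def, ← hb_def]
  rw [div_eq_iff hG1a, mul_div_assoc', div_mul_eq_mul_div, eq_div_iff hG1b]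
  linear_combination key
end

section
/- Let n ≥ 1 and let a₁, …, a_{2n+2} be complex numbers that are pairwise distinct, with a_ℓ² ≠ a_k² for ℓ ≠ k and a_ℓ + a_k ≠ 0 for all ℓ < k. Then (−1)^{n(n−1)/2} · Σ_{S ⊆ {1,…,2n+2}, |S| = n} [ (∏_{j∈S} a_j) / (∏_{j∈S} ∏_{ℓ∉S} (a_ℓ² − a_j²)) ] = (−1)^n · (Σ_{ℓ=1}^{2n+2} a_ℓ) / ∏_{1 ≤ ℓ < k ≤ 2n+2} (a_ℓ + a_k). -/
/-!
Write `b = a²` and `Δ(x) = ∏_{i<j} (x_j - x_i)`. The alternant of `a` with exponents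
`0, 1, …, 2n, 2n + 2` has determinant `(∑ a) · Δ(a)`. Its Laplace expansion along the `n`
columns with odd exponents `1, 3, …, 2n - 1` runs over the `n`-subsets `S` of rows: the odd
minor is `(∏_{j ∈ S} a_j) · Δ(b_S)` and the complementary even minor is `Δ(b_{Sᶜ})`.
Reordering the rows as `S` followed by `Sᶜ` turns the shuffle sign into
`Δ(b) / (Δ(b_S) Δ(b_{Sᶜ}) ∏_{j ∈ S, ℓ ∉ S} (b_ℓ - b_j))`, up to the fixed sign
`(-1)^(n(n+1)/2)` counting the inversions between odd and even columns. Dividing by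
`Δ(b) = Δ(a) ∏_{ℓ<k} (a_ℓ + a_k)` gives the identity.
-/

open Finset Matrix Equiv Polynomial

lemma prod_Ioi_eq_prod_ite {M : Type*} [CommMonoid M] {k : ℕ} (i : Fin k) (f : Fin k → M) :
    ∏ j ∈ Ioi i, f j = ∏ j, if i < j then f j else 1 := by
  rw [← prod_filter, filter_lt_eq_Ioi]

lemma prod_filter_lt_eq_prod_Ioi {M : Type*} [CommMonoid M] {k : ℕ} (g : Fin k → Fin k → M) :
    ∏ ij ∈ univ.filter (fun ij : Fin k × Fin k => ij.1 < ij.2), g ij.1 ij.2 =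
      ∏ i, ∏ j ∈ Ioi i, g i j := by
  simp only [prod_filter, Fintype.prod_prod_type, prod_Ioi_eq_prod_ite]

lemma prod_orderEmbOfFin {M α : Type*} [CommMonoid M] [LinearOrder α] (s : Finset α) {k : ℕ}
    (h : #s = k) (g : α → M) : ∏ i, g (s.orderEmbOfFin h i) = ∏ x ∈ s, g x := by
  conv_rhs => rw [← map_orderEmbOfFin_univ s h]
  rw [prod_map]
  rfl

section Vandermonde

variable {R : Type*} [CommRing R] {p q m : ℕ}

lemma det_vandermonde_sq {k : ℕ} (x : Fin k → R) :
    (vandermonde fun i => x i ^ 2).det =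
      (vandermonde x).det * ∏ ij ∈ univ.filter (fun ij : Fin k × Fin k => ij.1 < ij.2),
        (x ij.1 + x ij.2) := by
  rw [det_vandermonde, det_vandermonde, prod_filter_lt_eq_prod_Ioi fun i j => x i + x j,
    ← prod_mul_distrib]
  refine prod_congr rfl fun i _ => ?_
  rw [← prod_mul_distrib]
  exact prod_congr rfl fun j _ => by ring

lemma det_of_pow_two_mul {k : ℕ} (x : Fin k → R) :
    (of fun i j : Fin k => x i ^ (2 * (j : ℕ))).det = (vandermonde fun i => x i ^ 2).det := by
  congr 1
  ext i j
  rw [of_apply, vandermonde_apply, pow_mul]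

lemma det_of_pow_two_mul_add_one {k : ℕ} (x : Fin k → R) :
    (of fun i j : Fin k => x i ^ (2 * (j : ℕ) + 1)).det =
      (∏ i, x i) * (vandermonde fun i => x i ^ 2).det := by
  rw [← det_mul_column]
  congr 1
  ext i j
  simp only [of_apply, vandermonde_apply]
  ring

lemma pow_succ_eq_sum_neg_coeff_mul_pow {k : ℕ} (w : Fin (k + 1) → R) (i : Fin (k + 1)) :
    w i ^ (k + 1) = ∑ d : Fin (k + 1), -(∏ j, (X - C (w j))).coeff d * w i ^ (d : ℕ) := by
  nontriviality R
  set P : R[X] := ∏ j, (X - C (w j))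
  have hmonic : P.Monic := monic_prod_of_monic _ _ fun j _ => monic_X_sub_C (w j)
  have hdeg : P.natDegree = k + 1 := by
    simp [P, natDegree_prod_of_monic _ _ fun j _ => monic_X_sub_C (w j)]
  have hroot : P.eval (w i) = 0 := by
    simp [P, eval_prod, prod_eq_zero (mem_univ i)]
  rw [hmonic.as_sum, hdeg] at hroot
  simp only [eval_add, eval_pow, eval_X, eval_finsetSum, eval_mul, eval_C] at hroot
  simp only [neg_mul, sum_neg_distrib, Fin.sum_univ_eq_sum_range (fun d => P.coeff d * w i ^ d)]
  linear_combination hroot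

/-- Since every `w i` is a root of `∏ j, (X - C (w j))`, the new last column is a combination of
the Vandermonde columns whose coefficient on the replaced column `k` is `e₁(w)`. -/
theorem det_vandermonde_updateCol_last {k : ℕ} (w : Fin (k + 1) → R) :
    ((vandermonde w).updateCol (Fin.last k) fun i => w i ^ (k + 1)).det =
      (∑ i, w i) * (vandermonde w).det := by
  have hcoeff : -(∏ j, (X - C (w j))).coeff k = ∑ i, w i := by
    simpa using congrArg Neg.neg (prod_X_sub_C_coeff_card_pred univ w (by simp))
  simp_rw [pow_succ_eq_sum_neg_coeff_mul_pow w]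
  rw [← smul_eq_mul _ (vandermonde w).det, ← hcoeff]
  convert det_updateCol_sum (vandermonde w) (Fin.last k) fun d => -(∏ j, (X - C (w j))).coeff d
    <;> simp [vandermonde_apply]

/-- A pair of indices from different blocks contributes a sign exactly when `e` puts its
right-block member first. -/
theorem det_vandermonde_eq_of_sumEquiv (e : Fin p ⊕ Fin q ≃ Fin m)
    (hl : StrictMono (e ∘ Sum.inl)) (hr : StrictMono (e ∘ Sum.inr)) (x : Fin m → R) :
    (vandermonde x).det =
      (vandermonde (x ∘ e ∘ Sum.inl)).det * (vandermonde (x ∘ e ∘ Sum.inr)).det *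
        ((-1) ^ #{ij : Fin p × Fin q | e (.inr ij.2) < e (.inl ij.1)} *
          ∏ i, ∏ j, (x (e (.inr j)) - x (e (.inl i)))) := by
  have hmixed :
      (∏ i, ∏ j, if e (.inl i) < e (.inr j) then x (e (.inr j)) - x (e (.inl i)) else 1) *
        (∏ j, ∏ i, if e (.inr j) < e (.inl i) then x (e (.inl i)) - x (e (.inr j)) else 1) =
      (-1) ^ #{ij : Fin p × Fin q | e (.inr ij.2) < e (.inl ij.1)} *
        ∏ i, ∏ j, (x (e (.inr j)) - x (e (.inl i))) := by
    rw [prod_comm (s := (univ : Finset (Fin q))), ← prod_const, prod_filter,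
      Fintype.prod_prod_type, ← prod_mul_distrib, ← prod_mul_distrib]
    refine prod_congr rfl fun i _ => ?_
    rw [← prod_mul_distrib, ← prod_mul_distrib]
    refine prod_congr rfl fun j _ => ?_
    rcases (e.injective.ne Sum.inl_ne_inr : e (.inl i) ≠ e (.inr j)).lt_or_gt with h | h
    · simp [h, h.not_gt]
    · simp [h, h.not_gt]
  have hl' : ∀ i j, e (.inl i) < e (.inl j) ↔ i < j := fun _ _ => hl.lt_iff_lt
  have hr' : ∀ i j, e (.inr i) < e (.inr j) ↔ i < j := fun _ _ => hr.lt_iff_lt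
  simp only [det_vandermonde, prod_Ioi_eq_prod_ite, Function.comp_apply]
  rw [← Fintype.prod_equiv e (fun u => ∏ u', if e u < e u' then x (e u') - x (e u) else 1) _
    (fun u => Fintype.prod_equiv e (fun u' => if e u < e u' then x (e u') - x (e u) else 1)
      _ fun _ => rfl)]
  simp only [Fintype.prod_sum_type, prod_mul_distrib, hl', hr']
  rw [← hmixed]
  ring

theorem sign_mul_det_vandermonde (e f : Fin p ⊕ Fin q ≃ Fin m) (hl : StrictMono (e ∘ Sum.inl))
    (hr : StrictMono (e ∘ Sum.inr)) (x : Fin m → R) :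
    Perm.sign (e.symm.trans f) * (vandermonde x).det =
      (vandermonde (x ∘ f ∘ Sum.inl)).det * (vandermonde (x ∘ f ∘ Sum.inr)).det *
        ((-1) ^ #{ij : Fin p × Fin q | e (.inr ij.2) < e (.inl ij.1)} *
          ∏ i, ∏ j, (x (f (.inr j)) - x (f (.inl i)))) := by
  have h := det_vandermonde_eq_of_sumEquiv e hl hr (x ∘ e.symm.trans f)
  simp only [Function.comp_def, coe_trans, symm_apply_apply] at h
  rw [← det_permute]
  exact h

end Vandermonde

section Laplace

variable {R : Type*} [CommRing R] {p q m : ℕ}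

lemma card_compl_of_sumEquiv (e : Fin p ⊕ Fin q ≃ Fin m) {S : Finset (Fin m)} (hS : #S = p) :
    #Sᶜ = q := by
  have hm : p + q = m := by simpa using Fintype.card_congr e
  rw [card_compl, hS, Fintype.card_fin]
  omega

def shuffleEquiv (e : Fin p ⊕ Fin q ≃ Fin m) (S : {S : Finset (Fin m) // #S = p}) :
    Fin p ⊕ Fin q ≃ Fin m :=
  finSumEquivOfFinset S.2 (card_compl_of_sumEquiv e S.2)

lemma image_shuffleEquiv_inl (e : Fin p ⊕ Fin q ≃ Fin m) (S : {S : Finset (Fin m) // #S = p})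
    (τ : Perm (Fin p)) : univ.image (fun i => shuffleEquiv e S (.inl (τ i))) = S.1 := by
  have : (fun i => shuffleEquiv e S (.inl (τ i))) = S.1.orderEmbOfFin S.2 ∘ τ := rfl
  rw [this, ← image_image, image_univ_equiv, image_orderEmbOfFin_univ]

lemma bijective_shuffleEquiv_sumCongr (e : Fin p ⊕ Fin q ≃ Fin m) :
    Function.Bijective
      fun x : Σ _ : {S : Finset (Fin m) // #S = p}, Perm (Fin p) × Perm (Fin q) =>
      (e.symm.trans ((sumCongr x.2.1 x.2.2).trans (shuffleEquiv e x.1)) : Perm (Fin m)) := by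
  have hm : p + q = m := by simpa using Fintype.card_congr e
  rw [Fintype.bijective_iff_injective_and_card]
  refine ⟨?_, ?_⟩
  · rintro ⟨S, τ, υ⟩ ⟨S', τ', υ'⟩ h
    have h' : (sumCongr τ υ).trans (shuffleEquiv e S) =
        (sumCongr τ' υ').trans (shuffleEquiv e S') :=
      Equiv.ext fun u => by simpa using congr($h (e u))
    obtain rfl : S = S' := Subtype.ext <| by
      rw [← image_shuffleEquiv_inl e S τ, ← image_shuffleEquiv_inl e S' τ']
      simpa using congr(univ.image fun i => $h' (.inl i))
    have : Perm.sumCongrHom _ _ (τ, υ) = Perm.sumCongrHom _ _ (τ', υ') :=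
      Equiv.ext fun u => (shuffleEquiv e S).injective <| by simpa using congr($h' u)
    rw [Perm.sumCongrHom_injective this]
  · simp only [Fintype.card_sigma, Fintype.card_prod, Fintype.card_perm, Fintype.card_fin,
      sum_const, card_univ, Fintype.card_subtype, univ_filter_card_eq, card_powersetCard,
      smul_eq_mul, ← hm, ← mul_assoc]
    simpa using Nat.choose_mul_factorial_mul_factorial (Nat.le_add_right p q)

lemma sum_sign_mul_prod_sumCongr (e f : Fin p ⊕ Fin q ≃ Fin m) (M : Matrix (Fin m) (Fin m) R) :
    ∑ x : Perm (Fin p) × Perm (Fin q), Perm.sign (e.symm.trans ((sumCongr x.1 x.2).trans f)) *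
      ∏ c, M (e.symm.trans ((sumCongr x.1 x.2).trans f) c) c =
    Perm.sign (e.symm.trans f) * (M.submatrix (f ∘ .inl) (e ∘ .inl)).det *
      (M.submatrix (f ∘ .inr) (e ∘ .inr)).det := by
  rw [det_apply', det_apply', mul_assoc, sum_mul_sum, mul_sum, Fintype.sum_prod_type]
  refine sum_congr rfl fun τ _ => ?_
  rw [mul_sum]
  refine sum_congr rfl fun υ _ => ?_
  have hσ : e.symm.trans ((sumCongr τ υ).trans f) =
      (e.symm.trans f : Perm (Fin m)) * e.permCongr (sumCongr τ υ) := by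
    ext c
    simp [Perm.mul_apply, permCongr_apply]
  rw [hσ, Perm.sign_mul, Perm.sign_permCongr, Perm.sign_sumCongr, ← hσ,
    ← e.prod_comp, Fintype.prod_sum_type]
  simp only [coe_trans, Function.comp_apply, symm_apply_apply, sumCongr_apply, Sum.map_inl,
    Sum.map_inr, submatrix_apply]
  push_cast
  ring

def laplaceTerm (e : Fin p ⊕ Fin q ≃ Fin m) (M : Matrix (Fin m) (Fin m) R)
    (S : {S : Finset (Fin m) // #S = p}) : R :=
  Perm.sign (e.symm.trans (shuffleEquiv e S)) *
    (M.submatrix (shuffleEquiv e S ∘ .inl) (e ∘ .inl)).det *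
    (M.submatrix (shuffleEquiv e S ∘ .inr) (e ∘ .inr)).det

theorem det_eq_sum_laplaceTerm (e : Fin p ⊕ Fin q ≃ Fin m) (M : Matrix (Fin m) (Fin m) R) :
    M.det = ∑ S, laplaceTerm e M S := by
  have h := Fintype.sum_bijective _ (bijective_shuffleEquiv_sumCongr e) _
    (fun σ => ((Perm.sign σ : ℤ) : R) * ∏ c, M (σ c) c) fun _ => rfl
  rw [det_apply', ← h, Fintype.sum_sigma]
  refine sum_congr rfl fun S _ => ?_
  dsimp only
  exact sum_sign_mul_prod_sumCongr e (shuffleEquiv e S) M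

end Laplace

section OddEven

variable {R : Type*} [CommRing R] (n : ℕ)

/-- The alternant with exponents `0, 1, …, 2n, 2n + 2`. -/
def gapAlternant (a : Fin (2 * n + 2) → R) : Matrix (Fin (2 * n + 2)) (Fin (2 * n + 2)) R :=
  (vandermonde a).updateCol (Fin.last _) fun i => a i ^ (2 * n + 2)

lemma det_gapAlternant (a : Fin (2 * n + 2) → R) :
    (gapAlternant n a).det = (∑ i, a i) * (vandermonde a).det :=
  det_vandermonde_updateCol_last a

/-- The columns of `gapAlternant n a` with the odd exponents `1, 3, …, 2n - 1` on the left and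
those with the even exponents `0, 2, …, 2n, 2n + 2` on the right. -/
noncomputable def oddEvenEquiv : Fin n ⊕ Fin (n + 2) ≃ Fin (2 * n + 2) :=
  Equiv.ofBijective
    (Sum.elim (fun j => ⟨2 * (j : ℕ) + 1, by omega⟩)
      fun k => ⟨min (2 * (k : ℕ)) (2 * n + 1), by omega⟩) <| by
    refine (Fintype.bijective_iff_injective_and_card _).2
      ⟨?_, by simp only [Fintype.card_sum, Fintype.card_fin]; ring⟩
    refine Function.Injective.sumElim (fun i j h => ?_) (fun i j h => ?_) fun i j h => ?_ <;>
      simp only [Fin.mk.injEq] at h <;> omega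

@[simp] lemma val_oddEvenEquiv_inl (j : Fin n) :
    (oddEvenEquiv n (.inl j) : ℕ) = 2 * (j : ℕ) + 1 := rfl

@[simp] lemma val_oddEvenEquiv_inr (k : Fin (n + 2)) :
    (oddEvenEquiv n (.inr k) : ℕ) = min (2 * (k : ℕ)) (2 * n + 1) := rfl

lemma strictMono_oddEvenEquiv_inl : StrictMono (oddEvenEquiv n ∘ Sum.inl) := fun i j h => by
  simp only [Function.comp_apply, Fin.lt_def, val_oddEvenEquiv_inl] at h ⊢
  omega

lemma strictMono_oddEvenEquiv_inr : StrictMono (oddEvenEquiv n ∘ Sum.inr) := fun i j h => by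
  simp only [Function.comp_apply, Fin.lt_def, val_oddEvenEquiv_inr] at h ⊢
  omega

lemma card_oddEvenEquiv_inversions :
    #{jk : Fin n × Fin (n + 2) | oddEvenEquiv n (.inr jk.2) < oddEvenEquiv n (.inl jk.1)} =
      n * (n - 1) / 2 + n := by
  have hrow (j : Fin n) :
      #{k : Fin (n + 2) | oddEvenEquiv n (.inr k) < oddEvenEquiv n (.inl j)} = j + 1 := by
    have : ({k | oddEvenEquiv n (.inr k) < oddEvenEquiv n (.inl j)} : Finset (Fin (n + 2))) =
        Iic ⟨j, by omega⟩ := by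
      ext k
      simp only [mem_filter, mem_univ, true_and, mem_Iic, Fin.lt_def, Fin.le_def,
        val_oddEvenEquiv_inl, val_oddEvenEquiv_inr]
      omega
    rw [this, Fin.card_Iic]
  rw [card_filter, Fintype.sum_prod_type]
  simp only [← card_filter, hrow]
  rw [Fin.sum_univ_eq_sum_range (· + 1), sum_add_distrib, sum_range_id]
  simp

lemma gapAlternant_oddEvenEquiv_inl (a : Fin (2 * n + 2) → R) (i : Fin (2 * n + 2))
    (j : Fin n) : gapAlternant n a i (oddEvenEquiv n (.inl j)) = a i ^ (2 * (j : ℕ) + 1) := by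
  have hj : oddEvenEquiv n (.inl j) ≠ Fin.last _ := fun h => by
    have := congrArg Fin.val h
    rw [val_oddEvenEquiv_inl, Fin.val_last] at this
    omega
  rw [gapAlternant, updateCol_ne hj, vandermonde_apply, val_oddEvenEquiv_inl]

lemma gapAlternant_oddEvenEquiv_inr (a : Fin (2 * n + 2) → R) (i : Fin (2 * n + 2))
    (k : Fin (n + 2)) : gapAlternant n a i (oddEvenEquiv n (.inr k)) = a i ^ (2 * (k : ℕ)) := by
  rw [gapAlternant]
  by_cases hk : (k : ℕ) = n + 1
  · have hlast : oddEvenEquiv n (.inr k) = Fin.last _ :=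
      Fin.ext (by rw [val_oddEvenEquiv_inr, Fin.val_last]; omega)
    rw [hlast, updateCol_self, hk]
    ring
  · have hk' : oddEvenEquiv n (.inr k) ≠ Fin.last _ := fun h => by
      have := congrArg Fin.val h
      rw [val_oddEvenEquiv_inr, Fin.val_last] at this
      omega
    rw [updateCol_ne hk', vandermonde_apply, val_oddEvenEquiv_inr, min_eq_left (by omega)]

lemma neg_one_pow_mul_laplaceTerm_mul_prod (a : Fin (2 * n + 2) → R)
    (S : {S : Finset (Fin (2 * n + 2)) // #S = n}) :
    (-1) ^ (n * (n - 1) / 2 + n) * laplaceTerm (oddEvenEquiv n) (gapAlternant n a) S *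
        ∏ j ∈ S.1, ∏ ℓ ∈ S.1ᶜ, (a ℓ ^ 2 - a j ^ 2) =
      (∏ j ∈ S.1, a j) * (vandermonde fun i => a i ^ 2).det := by
  set f := shuffleEquiv (oddEvenEquiv n) S
  set ε : R := ((Perm.sign ((oddEvenEquiv n).symm.trans f) : ℤ) : R)
  have hodd : ((gapAlternant n a).submatrix (f ∘ .inl) (oddEvenEquiv n ∘ .inl)).det =
      (∏ j ∈ S.1, a j) * (vandermonde ((fun i => a i ^ 2) ∘ f ∘ .inl)).det := by
    rw [← prod_orderEmbOfFin S.1 S.2]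
    refine (congrArg det ?_).trans (det_of_pow_two_mul_add_one (a ∘ f ∘ .inl))
    ext i j
    simp [f, gapAlternant_oddEvenEquiv_inl]
  have heven : ((gapAlternant n a).submatrix (f ∘ .inr) (oddEvenEquiv n ∘ .inr)).det =
      (vandermonde ((fun i => a i ^ 2) ∘ f ∘ .inr)).det := by
    refine (congrArg det ?_).trans (det_of_pow_two_mul (a ∘ f ∘ .inr))
    ext i j
    simp [gapAlternant_oddEvenEquiv_inr]
  have hcross : ∏ i, ∏ j, (a (f (.inr j)) ^ 2 - a (f (.inl i)) ^ 2) =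
      ∏ j ∈ S.1, ∏ ℓ ∈ S.1ᶜ, (a ℓ ^ 2 - a j ^ 2) := by
    rw [← prod_orderEmbOfFin S.1 S.2]
    exact prod_congr rfl fun i _ => prod_orderEmbOfFin _
      (card_compl_of_sumEquiv (oddEvenEquiv n) S.2) fun ℓ => a ℓ ^ 2 - a (f (.inl i)) ^ 2
  have hsign := sign_mul_det_vandermonde _ f (strictMono_oddEvenEquiv_inl n)
    (strictMono_oddEvenEquiv_inr n) fun i => a i ^ 2
  rw [card_oddEvenEquiv_inversions, hcross] at hsign
  have hε : ε * ε = 1 := by simp [ε, ← Int.cast_mul, ← Units.val_mul, Int.units_mul_self]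
  rw [laplaceTerm, hodd, heven]
  linear_combination (-(∏ j ∈ S.1, a j) * ε) * hsign +
    ((∏ j ∈ S.1, a j) * (vandermonde fun i => a i ^ 2).det) * hε

lemma prod_div_prod_eq_laplaceTerm {K : Type*} [Field K] (a : Fin (2 * n + 2) → K)
    (ha : Function.Injective fun i => a i ^ 2) (S : {S : Finset (Fin (2 * n + 2)) // #S = n}) :
    (∏ j ∈ S.1, a j) / ∏ j ∈ S.1, ∏ ℓ ∈ S.1ᶜ, (a ℓ ^ 2 - a j ^ 2) =
      (-1) ^ (n * (n - 1) / 2 + n) * laplaceTerm (oddEvenEquiv n) (gapAlternant n a) S /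
        (vandermonde fun i => a i ^ 2).det := by
  have hcross : ∏ j ∈ S.1, ∏ ℓ ∈ S.1ᶜ, (a ℓ ^ 2 - a j ^ 2) ≠ 0 :=
    prod_ne_zero_iff.2 fun j hj => prod_ne_zero_iff.2 fun ℓ hℓ =>
      sub_ne_zero.2 fun h => mem_compl.1 hℓ (ha h ▸ hj)
  rw [div_eq_div_iff hcross (det_vandermonde_ne_zero_iff.2 ha)]
  linear_combination (neg_one_pow_mul_laplaceTerm_mul_prod n a S).symm

end OddEven

theorem rational_Cn_beta_subset_identity_general (n : ℕ)
    (a : Fin (2 * n + 2) → ℂ)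
    (hsq : ∀ ℓ k, ℓ ≠ k → (a ℓ) ^ 2 ≠ (a k) ^ 2) :
    (-1 : ℂ) ^ (n * (n - 1) / 2) *
      ∑ S ∈ Finset.powersetCard n (Finset.univ : Finset (Fin (2 * n + 2))),
        (∏ j ∈ S, a j) / (∏ j ∈ S, ∏ ℓ ∈ Sᶜ, ((a ℓ) ^ 2 - (a j) ^ 2)) =
    (-1 : ℂ) ^ n * (∑ ℓ, a ℓ) /
      ∏ p ∈ Finset.univ.filter (fun p : Fin (2 * n + 2) × Fin (2 * n + 2) => p.1 < p.2),
        (a p.1 + a p.2) := by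
  have ha : Function.Injective fun i => a i ^ 2 := fun i j h => by_contra fun hij => hsq i j hij h
  obtain ⟨hV, hP⟩ :=
    mul_ne_zero_iff.1 (det_vandermonde_sq a ▸ det_vandermonde_ne_zero_iff.2 ha)
  rw [sum_subtype _ fun S => mem_powersetCard_univ,
    Fintype.sum_congr _ _ (prod_div_prod_eq_laplaceTerm n a ha), ← sum_div, ← mul_sum,
    ← det_eq_sum_laplaceTerm, det_gapAlternant, det_vandermonde_sq]
  field_simp
  rw [← pow_add, ← add_assoc, ← two_mul, pow_add, pow_mul, neg_one_sq, one_pow, one_mul,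
    mul_comm]

theorem rational_Cn_beta_subset_identity (n : ℕ) (hn : 1 ≤ n)
    (a : Fin (2 * n + 2) → ℂ)
    (hdist : ∀ ℓ k, ℓ ≠ k → a ℓ ≠ a k)
    (hsq : ∀ ℓ k, ℓ ≠ k → (a ℓ) ^ 2 ≠ (a k) ^ 2)
    (hsum : ∀ ℓ k : Fin (2 * n + 2), ℓ < k → a ℓ + a k ≠ 0) :
    (-1 : ℂ) ^ (n * (n - 1) / 2) *
      ∑ S ∈ Finset.powersetCard n (Finset.univ : Finset (Fin (2 * n + 2))),
        (∏ j ∈ S, a j) / (∏ j ∈ S, ∏ ℓ ∈ Sᶜ, ((a ℓ) ^ 2 - (a j) ^ 2)) =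
    (-1 : ℂ) ^ n * (∑ ℓ, a ℓ) /
      ∏ p ∈ Finset.univ.filter (fun p : Fin (2 * n + 2) × Fin (2 * n + 2) => p.1 < p.2),
        (a p.1 + a p.2) :=
  rational_Cn_beta_subset_identity_general n a hsq
end

section
/- Let a₁, a₂, a₃, a₄ ∈ ℂ with Im(a_ℓ) < 0 for all ℓ, the a_ℓ pairwise distinct, and a_ℓ + a_k ≠ 0 for all ℓ ≠ k. Then (1/(π·i)) · ∫_{−∞}^{∞} x² / ∏_{ℓ=1}^{4} (a_ℓ² − x²) dx = −(a₁ + a₂ + a₃ + a₄) / ∏_{1 ≤ ℓ < k ≤ 4} (a_ℓ + a_k). -/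
/-!
Writing `v ℓ = a ℓ ^ 2`, Lagrange interpolation of the polynomial `X` at the distinct nodes `v ℓ`
gives the partial fraction decomposition
`x² / ∏ (v ℓ - x²) = ∑ ℓ, v ℓ / ∏_{k ≠ ℓ} (v k - v ℓ) · (a ℓ² - x²)⁻¹`.
Each summand integrates to `π i / a ℓ`: with `b = i a`, `Re b > 0`, the function
`(2 i b)⁻¹ (log (b + i x) - log (b - i x))` is an antiderivative of `(x² + b²)⁻¹` with limits
`± π / (2 b)` at `±∞`. What remains is a rational identity in `a 0, …, a 3`.
-/

open Complex MeasureTheory Finset Filter Topology Polynomial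

namespace Lagrange
variable {F ι : Type*} [Field F] [DecidableEq ι] {s : Finset ι} {v : ι → F}

theorem eval_basis_eq_prod (i : ι) (y : F) :
    (Lagrange.basis s v i).eval y = ∏ j ∈ s.erase i, (v j - y) / (v j - v i) := by
  rw [Lagrange.basis, eval_prod]
  refine prod_congr rfl fun j _ => ?_
  rw [basisDivisor, eval_mul, eval_C, eval_sub, eval_X, eval_C, ← neg_div_neg_eq, neg_sub, neg_sub,
    div_eq_inv_mul]

theorem eval_div_prod_sub_eq_sum (hvs : Set.InjOn v s) {p : F[X]} (hp : p.degree < #s) {y : F}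
    (hy : ∀ i ∈ s, v i ≠ y) :
    p.eval y / ∏ i ∈ s, (v i - y) =
      ∑ i ∈ s, p.eval (v i) / (∏ j ∈ s.erase i, (v j - v i)) / (v i - y) := by
  conv_lhs => rw [eq_interpolate hvs hp, interpolate_apply, eval_finsetSum, sum_div]
  refine sum_congr rfl fun i hi => ?_
  have hyi : v i - y ≠ 0 := sub_ne_zero.2 (hy i hi)
  have hrest : ∏ j ∈ s.erase i, (v j - y) ≠ 0 :=
    prod_ne_zero_iff.2 fun j hj => sub_ne_zero.2 (hy j (mem_of_mem_erase hj))
  rw [eval_mul, eval_C, eval_basis_eq_prod, prod_div_distrib, ← mul_prod_erase s _ hi]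
  field_simp
end Lagrange

section
variable {b : ℂ}

theorem add_I_mul_ofReal_mem_slitPlane (hb : 0 < b.re) (t : ℝ) : b + I * t ∈ slitPlane :=
  mem_slitPlane_iff.2 (Or.inl (by simpa using hb))

theorem ofReal_sq_add_sq_eq_mul (x : ℝ) :
    (x : ℂ) ^ 2 + b ^ 2 = (b + I * x) * (b + I * (-x : ℝ)) := by
  push_cast
  linear_combination (x : ℂ) ^ 2 * I_sq

theorem ofReal_sq_add_sq_ne_zero (hb : 0 < b.re) (x : ℝ) : (x : ℂ) ^ 2 + b ^ 2 ≠ 0 := by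
  rw [ofReal_sq_add_sq_eq_mul]
  exact mul_ne_zero (slitPlane_ne_zero (add_I_mul_ofReal_mem_slitPlane hb x))
    (slitPlane_ne_zero (add_I_mul_ofReal_mem_slitPlane hb _))

theorem integrable_inv_ofReal_sq_add_sq (hb : 0 < b.re) :
    Integrable fun x : ℝ => ((x : ℂ) ^ 2 + b ^ 2)⁻¹ := by
  have hcont : Continuous fun x : ℝ => ((x : ℂ) ^ 2 + b ^ 2)⁻¹ :=
    Continuous.inv₀ (by fun_prop) (ofReal_sq_add_sq_ne_zero hb)
  have hlarge : ∀ᶠ x : ℝ in cocompact ℝ, 1 + 2 * ‖b‖ ^ 2 ≤ ‖x‖ ^ 2 :=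
    (tendsto_pow_atTop two_ne_zero |>.comp tendsto_norm_cocompact_atTop).eventually_ge_atTop _
  refine hcont.locallyIntegrable.integrable_of_isBigO_cocompact ?_
    (integrable_inv_one_add_sq.integrableAtFilter _)
  refine Asymptotics.IsBigO.of_bound 2 (hlarge.mono fun x hx => ?_)
  have hlow : (1 + x ^ 2) / 2 ≤ ‖(x : ℂ) ^ 2 + b ^ 2‖ := by
    have := norm_sub_norm_le ((x : ℂ) ^ 2) (-b ^ 2)
    rw [norm_neg, sub_neg_eq_add, norm_pow, norm_pow, norm_real] at this
    rw [Real.norm_eq_abs, sq_abs] at hx this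
    linarith
  rw [norm_inv, norm_inv, Real.norm_of_nonneg (by positivity), ← div_eq_mul_inv,
    le_div_iff₀ (by positivity)]
  calc ‖(x : ℂ) ^ 2 + b ^ 2‖⁻¹ * (1 + x ^ 2)
      ≤ ‖(x : ℂ) ^ 2 + b ^ 2‖⁻¹ * (2 * ‖(x : ℂ) ^ 2 + b ^ 2‖) := by gcongr; linarith
    _ = 2 := by field_simp [norm_ne_zero_iff.2 (ofReal_sq_add_sq_ne_zero hb x)]

theorem hasDerivAt_log_add_I_mul (hb : 0 < b.re) (x : ℝ) :
    HasDerivAt (fun t : ℝ => log (b + I * t)) (I / (b + I * x)) x := by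
  have hlin : HasDerivAt (fun z : ℂ => b + I * z) I x := by
    simpa using ((hasDerivAt_id (x : ℂ)).const_mul I).const_add b
  simpa [div_eq_inv_mul] using
    ((hasDerivAt_log (add_I_mul_ofReal_mem_slitPlane hb x)).comp (x : ℂ) hlin).comp_ofReal

theorem tendsto_log_add_I_mul_sub_atTop (hb : 0 < b.re) :
    Tendsto (fun x : ℝ => log (b + I * x) - log (b + I * (-x : ℝ))) atTop
      (𝓝 (Real.pi * I)) := by
  have hcont : ContinuousAt (fun z : ℂ => log (z + I) - log (z - I)) 0 :=
    ((continuousAt_clog (by simp [mem_slitPlane_iff])).comp (by fun_prop)).sub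
      ((continuousAt_clog (by simp [mem_slitPlane_iff])).comp (by fun_prop))
  have hsmall : Tendsto (fun x : ℝ => b * ((x⁻¹ : ℝ) : ℂ)) atTop (𝓝 0) := by
    simpa using ((continuous_ofReal.tendsto 0).comp tendsto_inv_atTop_zero).const_mul b
  have hlim := hcont.tendsto.comp hsmall
  rw [Function.comp_def, zero_add, zero_sub, log_I, log_neg_I,
    show (Real.pi : ℂ) / 2 * I - -(Real.pi / 2) * I = Real.pi * I by ring] at hlim
  -- for `x > 0`, `log (x * w) = log x + log w`, so the difference is
  -- `log (b / x + I) - log (b / x - I)`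
  refine hlim.congr' ((eventually_gt_atTop 0).mono fun x hx => ?_)
  have hx' : (x : ℂ) ≠ 0 := ofReal_ne_zero.2 hx.ne'
  have hne (t : ℝ) : b + I * t ≠ 0 := slitPlane_ne_zero (add_I_mul_ofReal_mem_slitPlane hb t)
  have hplus : b + I * x = x * (b * ((x⁻¹ : ℝ) : ℂ) + I) := by push_cast; field_simp
  have hminus : b + I * (-x : ℝ) = x * (b * ((x⁻¹ : ℝ) : ℂ) - I) := by push_cast; field_simp; ring
  have hplus' : b * ((x⁻¹ : ℝ) : ℂ) + I ≠ 0 := by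
    rintro h; rw [h, mul_zero] at hplus; exact hne x hplus
  have hminus' : b * ((x⁻¹ : ℝ) : ℂ) - I ≠ 0 := by
    rintro h; rw [h, mul_zero] at hminus; exact hne _ hminus
  simp only [hplus, hminus, log_ofReal_mul hx hplus', log_ofReal_mul hx hminus']
  ring

theorem integral_inv_ofReal_sq_add_sq (hb : 0 < b.re) :
    ∫ x : ℝ, ((x : ℂ) ^ 2 + b ^ 2)⁻¹ = Real.pi / b := by
  have hb0 : b ≠ 0 := by rintro rfl; simp at hb
  set L : ℝ → ℂ := fun x => log (b + I * x) - log (b + I * (-x : ℝ))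
  have hderiv (x : ℝ) : HasDerivAt (fun t => (2 * I * b)⁻¹ * L t) ((x : ℂ) ^ 2 + b ^ 2)⁻¹ x := by
    have hL := (hasDerivAt_log_add_I_mul hb x).sub
      ((hasDerivAt_log_add_I_mul hb (-x)).scomp x (hasDerivAt_neg x))
    refine (hL.const_mul _).congr_deriv ?_
    have h1 := slitPlane_ne_zero (add_I_mul_ofReal_mem_slitPlane hb x)
    have h2 := slitPlane_ne_zero (add_I_mul_ofReal_mem_slitPlane hb (-x))
    rw [ofReal_sq_add_sq_eq_mul, neg_one_smul, sub_neg_eq_add]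
    field_simp
    push_cast
    ring
  have htop := (tendsto_log_add_I_mul_sub_atTop hb).const_mul (2 * I * b)⁻¹
  have hbot : Tendsto (fun x => (2 * I * b)⁻¹ * L x) atBot
      (𝓝 ((2 * I * b)⁻¹ * -(Real.pi * I))) := by
    -- `L` is odd
    refine (((tendsto_log_add_I_mul_sub_atTop hb).comp tendsto_neg_atBot_atTop).neg.const_mul
      _).congr fun x => ?_
    simp [L]
  rw [integral_of_hasDerivAt_of_tendsto hderiv (integrable_inv_ofReal_sq_add_sq hb) hbot htop]
  field_simp
  ring
end

section
variable {a : ℂ}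

theorem sq_sub_ofReal_sq_eq_neg (x : ℝ) : a ^ 2 - (x : ℂ) ^ 2 = -((x : ℂ) ^ 2 + (I * a) ^ 2) := by
  linear_combination a ^ 2 * I_sq

theorem sq_sub_ofReal_sq_ne_zero (ha : a.im < 0) (x : ℝ) : a ^ 2 - (x : ℂ) ^ 2 ≠ 0 := by
  rw [sq_sub_ofReal_sq_eq_neg, neg_ne_zero]
  exact ofReal_sq_add_sq_ne_zero (by simpa using ha) x

theorem integral_inv_sq_sub_ofReal_sq (ha : a.im < 0) :
    Integrable (fun x : ℝ => (a ^ 2 - (x : ℂ) ^ 2)⁻¹) ∧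
      ∫ x : ℝ, (a ^ 2 - (x : ℂ) ^ 2)⁻¹ = Real.pi * I / a := by
  have hb : 0 < (I * a).re := by simpa using ha
  have ha0 : a ≠ 0 := by rintro rfl; simp at ha
  simp only [sq_sub_ofReal_sq_eq_neg, inv_neg, integral_neg, integral_inv_ofReal_sq_add_sq hb]
  refine ⟨(integrable_inv_ofReal_sq_add_sq hb).neg, ?_⟩
  field_simp
  linear_combination -I_sq
end

theorem add_ne_zero_of_sq_ne_sq {K : Type*} [Field K] {x y : K} (h : x ^ 2 ≠ y ^ 2) :
    x + y ≠ 0 := by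
  rintro hxy
  rw [eq_neg_of_add_eq_zero_left hxy, neg_sq] at h
  exact h rfl

theorem div_prod_sq_sub_sq_add_four {K : Type*} [Field K] {A B C D : K}
    (hAB : A ^ 2 ≠ B ^ 2) (hAC : A ^ 2 ≠ C ^ 2) (hAD : A ^ 2 ≠ D ^ 2) (hBC : B ^ 2 ≠ C ^ 2)
    (hBD : B ^ 2 ≠ D ^ 2) (hCD : C ^ 2 ≠ D ^ 2) :
    A / ((B ^ 2 - A ^ 2) * ((C ^ 2 - A ^ 2) * (D ^ 2 - A ^ 2))) +
      B / ((A ^ 2 - B ^ 2) * ((C ^ 2 - B ^ 2) * (D ^ 2 - B ^ 2))) +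
      C / ((A ^ 2 - C ^ 2) * ((B ^ 2 - C ^ 2) * (D ^ 2 - C ^ 2))) +
      D / ((A ^ 2 - D ^ 2) * ((B ^ 2 - D ^ 2) * (C ^ 2 - D ^ 2))) =
    -(A + B + C + D) / ((A + B) * (A + C) * (A + D) * (B + C) * (B + D) * (C + D)) := by
  field_simp [sub_ne_zero, add_ne_zero_of_sq_ne_sq, hAB, hAC, hAD, hBC, hBD, hCD, hAB.symm,
    hAC.symm, hAD.symm, hBC.symm, hBD.symm, hCD.symm]
  ring

theorem sum_div_prod_erase_sq_sub_sq_four {K : Type*} [Field K] {a : Fin 4 → K}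
    (ha : Function.Injective fun ℓ => a ℓ ^ 2) :
    ∑ ℓ, a ℓ / ∏ k ∈ univ.erase ℓ, (a k ^ 2 - a ℓ ^ 2) =
      -(∑ ℓ, a ℓ) / ∏ p ∈ univ.filter (fun p : Fin 4 × Fin 4 => p.1 < p.2), (a p.1 + a p.2) := by
  rw [prod_filter, ← univ_product_univ, prod_product]
  simp only [Fin.sum_univ_four, Fin.prod_univ_four,
    show univ.erase (0 : Fin 4) = {1, 2, 3} by decide,
    show univ.erase (1 : Fin 4) = {0, 2, 3} by decide,
    show univ.erase (2 : Fin 4) = {0, 1, 3} by decide,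
    show univ.erase (3 : Fin 4) = {0, 1, 2} by decide]
  simp only [mem_insert, mem_singleton, Fin.reduceEq, or_self, not_false_eq_true, prod_insert,
    prod_singleton, Fin.reduceLT, ↓reduceIte, one_mul, mul_one]
  rw [div_prod_sq_sub_sq_add_four (ha.ne (by decide)) (ha.ne (by decide)) (ha.ne (by decide))
    (ha.ne (by decide)) (ha.ne (by decide)) (ha.ne (by decide))]
  ring

theorem rational_beta_integral_four (a : Fin 4 → ℂ)
    (him : ∀ ℓ, (a ℓ).im < 0)
    (hdist : ∀ ℓ k, ℓ ≠ k → a ℓ ≠ a k)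
    (hsum : ∀ ℓ k, ℓ ≠ k → a ℓ + a k ≠ 0) :
    (1 / ((Real.pi : ℂ) * Complex.I)) *
      ∫ x : ℝ, ((x : ℂ) ^ 2 / ∏ ℓ, ((a ℓ) ^ 2 - (x : ℂ) ^ 2)) =
    -(∑ ℓ, a ℓ) /
      ∏ p ∈ Finset.univ.filter (fun p : Fin 4 × Fin 4 => p.1 < p.2), (a p.1 + a p.2) := by
  have hinj : Function.Injective fun ℓ => a ℓ ^ 2 := fun ℓ k h => by
    by_contra hne
    rcases sq_eq_sq_iff_eq_or_eq_neg.mp h with h' | h'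
    · exact hdist ℓ k hne h'
    · exact hsum ℓ k hne (by rw [h', neg_add_cancel])
  have hint ℓ := integral_inv_sq_sub_ofReal_sq (him ℓ)
  have hpf (x : ℝ) : (x : ℂ) ^ 2 / ∏ ℓ, (a ℓ ^ 2 - (x : ℂ) ^ 2) =
      ∑ ℓ, (a ℓ ^ 2 / ∏ k ∈ univ.erase ℓ, (a k ^ 2 - a ℓ ^ 2)) * (a ℓ ^ 2 - (x : ℂ) ^ 2)⁻¹ := by
    simpa [div_eq_mul_inv] using Lagrange.eval_div_prod_sub_eq_sum hinj.injOn (s := univ)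
      (p := X) (by simp) (y := (x : ℂ) ^ 2) fun ℓ _ =>
        sub_ne_zero.1 (sq_sub_ofReal_sq_ne_zero (him ℓ) x)
  simp_rw [hpf]
  rw [integral_finsetSum _ fun ℓ _ => (hint ℓ).1.const_mul _,
    ← sum_div_prod_erase_sq_sub_sq_four hinj, mul_sum]
  refine sum_congr rfl fun ℓ _ => ?_
  rw [integral_const_mul, (hint ℓ).2]
  have hπI : (Real.pi : ℂ) * I ≠ 0 := by simp [Real.pi_ne_zero]
  have ha : a ℓ ≠ 0 := by rintro h; simpa [h] using him ℓ
  field_simp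
end

section
/- Let a, b ∈ ℂ. Then the function x ↦ Γ(x + a) / (Γ(x + b) · x^{a−b}) (with x^{a−b} := exp((a−b)·log x) for x > 0) tends to 1 as the real variable x → +∞. -/
open Complex Filter Set MeasureTheory Topology

/-!
For `0 < re a`, Euler's Beta integral `Γ(a) Γ(x) = Γ(x + a) B(a, x)` turns the ratio
`Γ(x + a) / (Γ(x) x^a)` into `Γ(a) / (x^a B(a, x))`, and the substitution `t = u / x` gives
`x^a B(a, x) = ∫₀ˣ (1 - u/x)^(x-1) u^(a-1) du`. As `x → ∞` the integrand tends to
`e^(-u) u^(a-1)` and is dominated by `e^(-u/2) u^(re a - 1)`, so the integral tends to `Γ(a)`.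
The functional equation `Γ(s + 1) = s Γ(s)` passes the limit from `a + 1` down to `a`, which
reaches every `a ∈ ℂ`; dividing the statements for `a` and `b` gives the theorem.
-/

lemma one_sub_div_rpow_sub_one_le_exp_neg_half {x u : ℝ} (hx : 2 ≤ x) (hu : 0 ≤ u)
    (hux : u ≤ x) : (1 - u / x) ^ (x - 1) ≤ Real.exp (-(1 / 2) * u) := by
  have hx0 : 0 < x := by linarith
  calc (1 - u / x) ^ (x - 1) ≤ Real.exp (-(u / x)) ^ (x - 1) :=
        Real.rpow_le_rpow (sub_nonneg.mpr (div_le_one_of_le₀ hux hx0.le))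
          (by linarith [Real.add_one_le_exp (-(u / x))]) (by linarith)
    _ = Real.exp (-(u / x) * (x - 1)) := (Real.exp_mul _ _).symm
    _ ≤ Real.exp (-(1 / 2) * u) := by
        have : u / x ≤ u / 2 := div_le_div_of_nonneg_left hu two_pos hx
        rw [Real.exp_le_exp, neg_mul, mul_sub, div_mul_cancel₀ u hx0.ne']
        linarith

lemma tendsto_one_sub_div_rpow_sub_one (u : ℝ) :
    Tendsto (fun x : ℝ => (1 - u / x) ^ (x - 1)) atTop (𝓝 (Real.exp (-u))) := by
  have hbase : Tendsto (fun x : ℝ => 1 + -u / x) atTop (𝓝 1) := by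
    simpa using (tendsto_const_nhds (x := -u)).div_atTop tendsto_id |>.const_add 1
  have h := (Real.tendsto_one_add_div_rpow_exp (-u)).div hbase one_ne_zero
  rw [div_one] at h
  refine h.congr' ?_
  filter_upwards [eventually_gt_atTop u, eventually_gt_atTop 0] with x hux hx0
  have hpos : 0 < 1 - u / x := sub_pos.mpr ((div_lt_one hx0).mpr hux)
  rw [Pi.div_apply, neg_div, ← sub_eq_add_neg, Real.rpow_sub hpos, Real.rpow_one]

lemma tendsto_integral_one_sub_div_rpow_mul_cpow {a : ℂ} (ha : 0 < a.re) :
    Tendsto (fun x : ℝ => ∫ u in (0 : ℝ)..x, ((1 - u / x) ^ (x - 1) : ℝ) * (u : ℂ) ^ (a - 1))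
      atTop (𝓝 (Gamma a)) := by
  rw [Gamma_eq_integral ha, GammaIntegral]
  let f : ℝ → ℝ → ℂ := fun x =>
    (Ioc 0 x).indicator fun u => ((1 - u / x) ^ (x - 1) : ℝ) * (u : ℂ) ^ (a - 1)
  have f_meas : ∀ x, AEStronglyMeasurable (f x) (volume.restrict (Ioi 0)) := fun x =>
    ((Measurable.aestronglyMeasurable (by fun_prop)).indicator measurableSet_Ioc)
  have f_bound : ∀ᶠ x in atTop, ∀ᵐ u ∂(volume.restrict (Ioi 0)),
      ‖f x u‖ ≤ u ^ (a.re - 1) * Real.exp (-(1 / 2) * u) := by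
    filter_upwards [eventually_ge_atTop 2] with x hx
    rw [ae_restrict_iff' measurableSet_Ioi]
    filter_upwards with u (hu : 0 < u)
    dsimp only [f]
    rcases lt_or_ge x u with hxu | hux
    · rw [indicator_of_notMem (notMem_Ioc_of_gt hxu), norm_zero]
      positivity
    · have hbase : 0 ≤ 1 - u / x := sub_nonneg.mpr (div_le_one_of_le₀ hux (by linarith))
      rw [indicator_of_mem (mem_Ioc.mpr ⟨hu, hux⟩), norm_mul,
        Complex.norm_of_nonneg (Real.rpow_nonneg hbase _), norm_cpow_eq_rpow_re_of_pos hu,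
        sub_re, one_re, mul_comm]
      gcongr
      exact one_sub_div_rpow_sub_one_le_exp_neg_half hx hu.le hux
  have bound_integrable :
      IntegrableOn (fun u : ℝ => u ^ (a.re - 1) * Real.exp (-(1 / 2) * u)) (Ioi 0) := by
    simpa only [Real.rpow_one, neg_mul] using integrableOn_rpow_mul_exp_neg_mul_rpow
      (s := a.re - 1) (by linarith) one_pos (one_half_pos (α := ℝ))
  have f_lim : ∀ᵐ u ∂(volume.restrict (Ioi 0)),
      Tendsto (fun x => f x u) atTop (𝓝 (Real.exp (-u) * (u : ℂ) ^ (a - 1))) := by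
    rw [ae_restrict_iff' measurableSet_Ioi]
    filter_upwards with u (hu : 0 < u)
    refine Tendsto.congr' ?_ ((tendsto_one_sub_div_rpow_sub_one u).ofReal.mul_const _)
    filter_upwards [eventually_ge_atTop u] with x hux
    dsimp only [f]
    rw [indicator_of_mem (mem_Ioc.mpr ⟨hu, hux⟩)]
  refine (tendsto_integral_filter_of_dominated_convergence _ (.of_forall f_meas) f_bound
    bound_integrable f_lim).congr' ?_
  filter_upwards [eventually_ge_atTop 0] with x hx
  rw [integral_indicator measurableSet_Ioc, intervalIntegral.integral_of_le hx,
    Measure.restrict_restrict_of_subset Ioc_subset_Ioi_self]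

lemma ofReal_cpow_mul_betaIntegral {x : ℝ} (hx : 0 < x) (a : ℂ) :
    (x : ℂ) ^ a * betaIntegral a x =
      ∫ u in (0 : ℝ)..x, ((1 - u / x) ^ (x - 1) : ℝ) * (u : ℂ) ^ (a - 1) := by
  have hx' : (x : ℂ) ≠ 0 := ofReal_ne_zero.mpr hx.ne'
  have hscale := intervalIntegral.smul_integral_comp_mul_left (a := 0) (b := 1)
    (f := fun u : ℝ => ((1 - u / x) ^ (x - 1) : ℝ) * (u : ℂ) ^ (a - 1)) x
  rw [mul_zero, mul_one] at hscale
  rw [← hscale, betaIntegral, real_smul, ← intervalIntegral.integral_const_mul,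
    ← intervalIntegral.integral_const_mul]
  refine intervalIntegral.integral_congr fun t ht => ?_
  rw [uIcc_of_le zero_le_one] at ht
  rw [mul_div_cancel_left₀ t hx.ne', ofReal_cpow (sub_nonneg.mpr ht.2), ofReal_mul,
    mul_cpow_ofReal_nonneg hx.le ht.1, cpow_sub _ _ hx', cpow_one]
  push_cast
  field_simp

lemma eventually_re_ofReal_add_pos (c : ℂ) : ∀ᶠ x : ℝ in atTop, 0 < ((x : ℂ) + c).re := by
  filter_upwards [eventually_gt_atTop (-c.re)] with x hx
  rw [add_re, ofReal_re]
  linarith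

lemma Gamma_ofReal_ne_zero {x : ℝ} (hx : 0 < x) : Gamma x ≠ 0 :=
  Gamma_ne_zero_of_re_pos (by rwa [ofReal_re])

lemma ofReal_cpow_ne_zero {x : ℝ} (hx : 0 < x) (a : ℂ) : (x : ℂ) ^ a ≠ 0 :=
  cpow_ne_zero_iff.mpr (Or.inl (ofReal_ne_zero.mpr hx.ne'))

lemma tendsto_Gamma_add_div_Gamma_mul_cpow_of_re_pos {a : ℂ} (ha : 0 < a.re) :
    Tendsto (fun x : ℝ => Gamma (x + a) / (Gamma x * (x : ℂ) ^ a)) atTop (𝓝 1) := by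
  have hΓa : Gamma a ≠ 0 := Gamma_ne_zero_of_re_pos ha
  have h := (tendsto_const_nhds (x := Gamma a)).div
    (tendsto_integral_one_sub_div_rpow_mul_cpow ha) hΓa
  rw [div_self hΓa] at h
  refine h.congr' ?_
  filter_upwards [eventually_gt_atTop 0] with x hx
  have hβ := Gamma_mul_Gamma_eq_betaIntegral ha (show 0 < (x : ℂ).re by rwa [ofReal_re])
  have hΓx := Gamma_ofReal_ne_zero hx
  have hB : betaIntegral a x ≠ 0 := by
    rintro hB
    rw [hB, mul_zero] at hβ
    exact mul_ne_zero hΓa hΓx hβ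
  have hxa := ofReal_cpow_ne_zero hx a
  rw [Pi.div_apply, ← ofReal_cpow_mul_betaIntegral hx, add_comm]
  field_simp
  linear_combination hβ

lemma tendsto_Gamma_add_div_Gamma_mul_cpow_of_add_one {a : ℂ}
    (h : Tendsto (fun x : ℝ => Gamma (x + (a + 1)) / (Gamma x * (x : ℂ) ^ (a + 1))) atTop
      (𝓝 1)) :
    Tendsto (fun x : ℝ => Gamma (x + a) / (Gamma x * (x : ℂ) ^ a)) atTop (𝓝 1) := by
  have hlin : Tendsto (fun x : ℝ => 1 + a * (x : ℂ)⁻¹) atTop (𝓝 1) := by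
    simpa using ((tendsto_inv₀_cobounded.comp (RCLike.tendsto_ofReal_atTop_cobounded ℂ)).const_mul
      a).const_add 1
  have h' := h.div hlin one_ne_zero
  rw [div_one] at h'
  refine h'.congr' ?_
  filter_upwards [eventually_gt_atTop 0, eventually_re_ofReal_add_pos a] with x hx hxa
  have hx' : (x : ℂ) ≠ 0 := ofReal_ne_zero.mpr hx.ne'
  have hxa' : (x : ℂ) + a ≠ 0 := fun h0 => by simp [h0] at hxa
  have hΓx := Gamma_ofReal_ne_zero hx
  have hxa_pow := ofReal_cpow_ne_zero hx a
  rw [Pi.div_apply, ← add_assoc, Gamma_add_one _ hxa', cpow_add _ _ hx', cpow_one]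
  field_simp

lemma tendsto_Gamma_add_div_Gamma_mul_cpow (a : ℂ) :
    Tendsto (fun x : ℝ => Gamma (x + a) / (Gamma x * (x : ℂ) ^ a)) atTop (𝓝 1) := by
  obtain ⟨n, hn⟩ := exists_nat_gt (-a.re)
  induction n generalizing a with
  | zero => exact tendsto_Gamma_add_div_Gamma_mul_cpow_of_re_pos (by simpa using hn)
  | succ n ih =>
    refine tendsto_Gamma_add_div_Gamma_mul_cpow_of_add_one (ih (a + 1) ?_)
    rw [add_re, one_re]
    push_cast at hn
    linarith

theorem gamma_ratio_stirling (a b : ℂ) :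
    Filter.Tendsto
      (fun x : ℝ => Complex.Gamma ((x : ℂ) + a) /
        (Complex.Gamma ((x : ℂ) + b) * Complex.exp ((a - b) * (Real.log x : ℂ))))
      Filter.atTop (nhds 1) := by
  have h := (tendsto_Gamma_add_div_Gamma_mul_cpow a).div
    (tendsto_Gamma_add_div_Gamma_mul_cpow b) one_ne_zero
  rw [div_one] at h
  refine h.congr' ?_
  filter_upwards [eventually_gt_atTop 0] with x hx
  have hx' : (x : ℂ) ≠ 0 := ofReal_ne_zero.mpr hx.ne'
  have hΓx := Gamma_ofReal_ne_zero hx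
  have hxa := ofReal_cpow_ne_zero hx a
  have hxb := ofReal_cpow_ne_zero hx b
  rw [Pi.div_apply, ofReal_log hx.le, mul_comm (a - b), ← cpow_def_of_ne_zero hx',
    cpow_sub _ _ hx']
  field_simp
end
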